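/- Under the assumptions of the high-energy expansion, the first coefficients of the expansion ln D(ζ) ~ Σ_{n≥1} ℓ_n(2iζ)^{-n} are ℓ₁ = -∫₀^∞ V(x) dx, ℓ₂ = V(0), ℓ₃ = 4γV(0) - V'(0) + ∫₀^∞ V²(x) dx, and ℓ₄ = V''(0) - 2V²(0) - 4γV'(0) + 8γ²V(0). -/

import Mathlib

open MeasureTheory Set Filter

/-- The coefficients `b_n`: `b_0 ≡ 1`, `b_{n+1}(x) = -b_n'(x) - ∫ₓ^∞ V b_n`. -/
noncomputable def bCoeff (V : ℝ → ℝ) : ℕ → ℝ → ℝ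
  | 0 => fun _ => 1
  | n + 1 => fun x => -(deriv (bCoeff V n) x) - ∫ y in Set.Ioi x, V y * bCoeff V n y

/-- The coefficients `d_n`: `d_0 = 1`, `d_n = b_n(0) + 2 ∑_{m=1}^{n-1} b_m'(0)(2γ)^{n-m-1}`. -/
noncomputable def dCoeff (V : ℝ → ℝ) (γ : ℝ) : ℕ → ℝ
  | 0 => 1
  | n + 1 => bCoeff V (n + 1) 0 +
      2 * ∑ m ∈ Finset.Ico 1 (n + 1), deriv (bCoeff V m) 0 * (2 * γ) ^ (n - m)

/-- Auxiliary table for the recursion `ℓ₁ = d₁`,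
`ℓ_n = d_n - n⁻¹ ∑_{j=1}^{n-1} j d_{n-j} ℓ_j`; `ellAux V γ n m = ℓ_m` for `m ≤ n`. -/
noncomputable def ellAux (V : ℝ → ℝ) (γ : ℝ) : ℕ → ℕ → ℝ
  | 0 => fun _ => 0
  | n + 1 => fun m =>
      if m = n + 1 then
        dCoeff V γ (n + 1) - ((n + 1 : ℝ))⁻¹ *
          ∑ j ∈ Finset.Ico 1 (n + 1), (j : ℝ) * dCoeff V γ (n + 1 - j) * ellAux V γ n j
      else ellAux V γ n m

/-- The coefficients `ℓ_n` of the expansion `ln D(ζ) ~ ∑ ℓ_n (2iζ)^{-n}`. -/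
noncomputable def ellCoeff (V : ℝ → ℝ) (γ : ℝ) (n : ℕ) : ℝ :=
  ellAux V γ n n

/-- the first four coefficients `ℓ₁, ℓ₂, ℓ₃, ℓ₄`. -/
theorem ell_coefficients (V : ℝ → ℝ) (γ : ℝ) (ρ : ℝ)
    (hρ : ρ ∈ Set.Ioc (1:ℝ) 2) (hVsm : ContDiff ℝ (⊤ : ℕ∞) V)
    (hVd : ∀ j : ℕ, ∃ C > (0:ℝ), ∀ x ≥ (0:ℝ),
      |iteratedDeriv j V x| ≤ C * (1 + x) ^ (-(ρ + (j : ℝ)))) :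
    ellCoeff V γ 1 = -∫ x in Set.Ioi (0:ℝ), V x ∧
    ellCoeff V γ 2 = V 0 ∧
    ellCoeff V γ 3 = 4 * γ * V 0 - deriv V 0 + ∫ x in Set.Ioi (0:ℝ), (V x) ^ 2 ∧
    ellCoeff V γ 4 = deriv (deriv V) 0 - 2 * (V 0) ^ 2 - 4 * γ * deriv V 0
      + 8 * γ ^ 2 * V 0 := by
  obtain ⟨hρ1, hρ2⟩ := hρ
  have hρ0 : (0:ℝ) < ρ := by linarith
  have hVc : Continuous V := hVsm.continuous
  have hVsm' : ContDiff ℝ ((⊤:ℕ∞) : WithTop ℕ∞) V := hVsm.of_le (by simp)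
  have hV'sm : ContDiff ℝ ((⊤:ℕ∞) : WithTop ℕ∞) (deriv V) := (contDiff_infty_iff_deriv.mp hVsm').2
  have hV'c : Continuous (deriv V) := hV'sm.continuous
  have hVdiff : ∀ x : ℝ, HasDerivAt V (deriv V x) x := fun x =>
    ((hVsm.differentiable (by simp)) x).hasDerivAt
  have hV'diff : ∀ x : ℝ, HasDerivAt (deriv V) (deriv (deriv V) x) x := fun x =>
    ((hV'sm.differentiable (by simp)) x).hasDerivAt
  -- decay bounds
  obtain ⟨C0, hC0pos, hC0⟩ := hVd 0
  obtain ⟨C1, hC1pos, hC1⟩ := hVd 1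
  simp only [iteratedDeriv_zero, Nat.cast_zero, add_zero] at hC0
  simp only [iteratedDeriv_one, Nat.cast_one] at hC1
  have hVbd : ∀ x : ℝ, 0 ≤ x → |V x| ≤ C0 := by
    intro x hx
    refine (hC0 x hx).trans ?_
    have h1 : (1 + x) ^ (-ρ) ≤ 1 :=
      Real.rpow_le_one_of_one_le_of_nonpos (by linarith) (by linarith)
    nlinarith
  have hV'bd : ∀ x : ℝ, 0 ≤ x → |deriv V x| ≤ C1 := by
    intro x hx
    refine (hC1 x hx).trans ?_
    have h1 : (1 + x) ^ (-(ρ + 1)) ≤ 1 :=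
      Real.rpow_le_one_of_one_le_of_nonpos (by linarith) (by linarith)
    nlinarith
  -- integrability of V on (0, ∞)
  have hcont : ContinuousOn (fun x : ℝ => (1 + x) ^ (-ρ)) (Ici 0) := by
    intro x hx
    refine (ContinuousAt.rpow_const ((continuous_const.add continuous_id).continuousAt)
      (Or.inl ?_)).continuousWithinAt
    simp only [mem_Ici] at hx
    simp only [Pi.add_apply, id]
    intro h; nlinarith
  have hVint : IntegrableOn V (Ioi 0) := by
    have hmaj : IntegrableOn (fun x : ℝ => C0 * (1 + x) ^ (-ρ)) (Ioi 0) := by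
      apply Integrable.const_mul
      have h1 : IntegrableOn (fun x : ℝ => x ^ (-ρ)) (Ioi 1) :=
        integrableOn_Ioi_rpow_of_lt (by linarith) one_pos
      rw [← Ioc_union_Ioi_eq_Ioi (zero_le_one (α := ℝ))]
      refine IntegrableOn.union (((hcont.mono Icc_subset_Ici_self).integrableOn_Icc).mono_set
        Ioc_subset_Icc_self) ?_
      have hsub : Ioi (1:ℝ) ⊆ Ici 0 := fun x hx => mem_Ici.2 (le_of_lt (lt_trans zero_lt_one hx))
      refine Integrable.mono' h1 ((hcont.mono hsub).aestronglyMeasurable measurableSet_Ioi) ?_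
      refine (ae_restrict_iff' measurableSet_Ioi).2 (ae_of_all _ fun x hx => ?_)
      have hx1 : (1:ℝ) < x := hx
      rw [Real.norm_eq_abs, abs_of_nonneg (Real.rpow_nonneg (by nlinarith) _)]
      exact Real.rpow_le_rpow_of_nonpos (lt_trans zero_lt_one hx1) (by linarith) (by linarith)
    refine Integrable.mono' hmaj hVc.aestronglyMeasurable.restrict ?_
    refine (ae_restrict_iff' measurableSet_Ioi).2 (ae_of_all _ fun x hx => ?_)
    rw [Real.norm_eq_abs]
    exact hC0 x (mem_Ioi.mp hx).le
  -- generic machinery for tail integrals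
  have key_int : ∀ (g : ℝ → ℝ) (K : ℝ), Continuous g →
      (∀ y : ℝ, 0 ≤ y → ‖g y‖ ≤ K * ‖V y‖) → ∀ a : ℝ, IntegrableOn g (Ioi a) := by
    intro g K hgc hbd a
    have h0 : IntegrableOn g (Ioi 0) := by
      refine Integrable.mono' ((hVint.norm).const_mul K) hgc.aestronglyMeasurable.restrict ?_
      exact (ae_restrict_iff' measurableSet_Ioi).2 (ae_of_all _ fun y hy => hbd y hy.le)
    rcases le_total a 0 with h | h
    · rw [← Ioc_union_Ioi_eq_Ioi h]
      exact (hgc.integrableOn_Ioc).union h0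
    · exact h0.mono_set (Ioi_subset_Ioi h)
  have tail_shift : ∀ (g : ℝ → ℝ), Continuous g → (∀ a : ℝ, IntegrableOn g (Ioi a)) →
      ∀ a u : ℝ, a ≤ u →
      (∫ y in Ioi a, g y) = (∫ y in a..u, g y) + ∫ y in Ioi u, g y := by
    intro g hgc hint a u hau
    rw [intervalIntegral.integral_of_le hau,
      ← setIntegral_union (Ioc_disjoint_Ioi le_rfl) measurableSet_Ioi
        ((hint a).mono_set Ioc_subset_Ioi_self) (hint u), Ioc_union_Ioi_eq_Ioi hau]
  have tail_deriv : ∀ (g : ℝ → ℝ), Continuous g → (∀ a : ℝ, IntegrableOn g (Ioi a)) →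
      ∀ x : ℝ, HasDerivAt (fun u => ∫ y in Ioi u, g y) (-g x) x := by
    intro g hgc hint x
    have hprim : HasDerivAt (fun u => ∫ y in (x-1)..u, g y) (g x) x :=
      intervalIntegral.integral_hasDerivAt_right (hgc.intervalIntegrable _ _)
        (hgc.stronglyMeasurableAtFilter _ _) hgc.continuousAt
    have hd := (hasDerivAt_const x (∫ y in Ioi (x-1), g y)).sub hprim
    have hev : (fun u => ∫ y in Ioi u, g y) =ᶠ[nhds x]
        (fun u => (∫ y in Ioi (x-1), g y) - ∫ y in (x-1)..u, g y) := by
      refine Filter.eventuallyEq_of_mem (Ioi_mem_nhds (by linarith : x - 1 < x)) ?_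
      intro u hu
      rw [tail_shift g hgc hint (x-1) u (le_of_lt hu)]
      ring
    simpa using hd.congr_of_eventuallyEq hev
  have tail_tendsto : ∀ (g : ℝ → ℝ), Continuous g → (∀ a : ℝ, IntegrableOn g (Ioi a)) →
      Tendsto (fun u => ∫ y in Ioi u, g y) atTop (nhds 0) := by
    intro g hgc hint
    have h := MeasureTheory.intervalIntegral_tendsto_integral_Ioi 0 (hint 0) tendsto_id
    have h2 : Tendsto (fun u : ℝ => (∫ y in Ioi 0, g y) - ∫ y in (0:ℝ)..u, g y)
        atTop (nhds ((∫ y in Ioi 0, g y) - ∫ y in Ioi 0, g y)) := tendsto_const_nhds.sub h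
    rw [sub_self] at h2
    refine h2.congr' ?_
    filter_upwards [Ioi_mem_atTop 0] with u hu
    rw [tail_shift g hgc hint 0 u (le_of_lt hu)]; ring
  -- the tail integrals W and I
  set W : ℝ → ℝ := fun u => ∫ y in Ioi u, V y with hWdef
  set I : ℝ → ℝ := fun u => ∫ y in Ioi u, (V y) ^ 2 with hIdef
  have hVintAll : ∀ a : ℝ, IntegrableOn V (Ioi a) := by
    refine key_int V 1 hVc (fun y _ => ?_)
    rw [one_mul]
  have hWd : ∀ x : ℝ, HasDerivAt W (-V x) x := fun x => tail_deriv V hVc hVintAll x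
  have hWc : Continuous W := continuous_iff_continuousAt.2 fun x => (hWd x).continuousAt
  have hWtend : Tendsto W atTop (nhds 0) := tail_tendsto V hVc hVintAll
  set MW : ℝ := ∫ y in Ioi (0:ℝ), ‖V y‖ with hMWdef
  have hMWnn : 0 ≤ MW := integral_nonneg fun y => norm_nonneg _
  have hWbd : ∀ y : ℝ, 0 ≤ y → |W y| ≤ MW := by
    intro y hy
    rw [← Real.norm_eq_abs]
    calc ‖W y‖ ≤ ∫ z in Ioi y, ‖V z‖ := norm_integral_le_integral_norm _
      _ ≤ MW := setIntegral_mono_set hVint.norm (ae_of_all _ fun z => norm_nonneg _)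
          (HasSubset.Subset.eventuallyLE (Ioi_subset_Ioi hy))
  have hV2c : Continuous (fun y => (V y) ^ 2) := hVc.pow 2
  have hV2bd : ∀ y : ℝ, 0 ≤ y → ‖(V y) ^ 2‖ ≤ C0 * ‖V y‖ := by
    intro y hy
    rw [Real.norm_eq_abs, Real.norm_eq_abs, abs_pow, sq]
    exact mul_le_mul_of_nonneg_right (hVbd y hy) (abs_nonneg _)
  have hV2intAll : ∀ a : ℝ, IntegrableOn (fun y => (V y) ^ 2) (Ioi a) :=
    key_int _ C0 hV2c hV2bd
  have hId : ∀ x : ℝ, HasDerivAt I (-(V x) ^ 2) x := fun x =>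
    tail_deriv _ hV2c hV2intAll x
  have hIc : Continuous I := continuous_iff_continuousAt.2 fun x => (hId x).continuousAt
  have hItend : Tendsto I atTop (nhds 0) := tail_tendsto _ hV2c hV2intAll
  set MI : ℝ := ∫ y in Ioi (0:ℝ), ‖(V y) ^ 2‖ with hMIdef
  have hIbd : ∀ y : ℝ, 0 ≤ y → |I y| ≤ MI := by
    intro y hy
    rw [← Real.norm_eq_abs]
    calc ‖I y‖ ≤ ∫ z in Ioi y, ‖(V z) ^ 2‖ := norm_integral_le_integral_norm _
      _ ≤ MI := setIntegral_mono_set (hV2intAll 0).norm (ae_of_all _ fun z => norm_nonneg _)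
          (HasSubset.Subset.eventuallyLE (Ioi_subset_Ioi hy))
  -- V tends to 0 at infinity
  have hVtend : Tendsto V atTop (nhds 0) := by
    have h0 : Tendsto (fun x : ℝ => C0 * (1 + x) ^ (-ρ)) atTop (nhds (C0 * 0)) := by
      refine Tendsto.const_mul C0 ?_
      exact (tendsto_rpow_neg_atTop hρ0).comp
        (tendsto_atTop_add_const_left atTop 1 tendsto_id)
    rw [mul_zero] at h0
    refine squeeze_zero_norm' ?_ h0
    filter_upwards [eventually_ge_atTop (0:ℝ)] with x hx
    rw [Real.norm_eq_abs]
    exact hC0 x hx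
  -- key integral identities
  have hintA : ∀ a : ℝ, IntegrableOn (fun y => V y * W y) (Ioi a) := by
    refine key_int _ MW (hVc.mul hWc) (fun y hy => ?_)
    rw [Real.norm_eq_abs, Real.norm_eq_abs, abs_mul, mul_comm MW]
    exact mul_le_mul_of_nonneg_left (hWbd y hy) (abs_nonneg _)
  have intA : ∀ x : ℝ, (∫ y in Ioi x, V y * W y) = (W x) ^ 2 / 2 := by
    intro x
    have hder : ∀ y ∈ Ici x, HasDerivAt (fun u => -(W u ^ 2 / 2)) (V y * W y) y := by
      intro y _
      have h := (((hWd y).pow 2).div_const 2).neg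
      convert h using 1
      all_goals first | rfl | ring
    have htend : Tendsto (fun u => -(W u ^ 2 / 2)) atTop (nhds 0) := by
      have h0 : (-((0:ℝ) ^ 2 / 2) : ℝ) = 0 := by norm_num
      exact h0 ▸ ((hWtend.pow 2).div_const 2).neg
    have h := integral_Ioi_of_hasDerivAt_of_tendsto' hder (hintA x) htend
    rw [h]; ring
  have hintB : ∀ a : ℝ, IntegrableOn (fun y => V y * (W y) ^ 2) (Ioi a) := by
    refine key_int _ (MW ^ 2) (hVc.mul (hWc.pow 2)) (fun y hy => ?_)
    rw [Real.norm_eq_abs, Real.norm_eq_abs, abs_mul, mul_comm (MW ^ 2), abs_pow]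
    exact mul_le_mul_of_nonneg_left (pow_le_pow_left₀ (abs_nonneg _) (hWbd y hy) 2)
      (abs_nonneg _)
  have intB : ∀ x : ℝ, (∫ y in Ioi x, V y * (W y) ^ 2) = (W x) ^ 3 / 3 := by
    intro x
    have hder : ∀ y ∈ Ici x, HasDerivAt (fun u => -(W u ^ 3 / 3)) (V y * (W y) ^ 2) y := by
      intro y _
      have h := (((hWd y).pow 3).div_const 3).neg
      convert h using 1
      all_goals first | rfl | ring
    have htend : Tendsto (fun u => -(W u ^ 3 / 3)) atTop (nhds 0) := by
      have h0 : (-((0:ℝ) ^ 3 / 3) : ℝ) = 0 := by norm_num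
      exact h0 ▸ ((hWtend.pow 3).div_const 3).neg
    have h := integral_Ioi_of_hasDerivAt_of_tendsto' hder (hintB x) htend
    rw [h]; ring
  -- closed forms for b₁, b₂, b₃
  have hb1 : bCoeff V 1 = fun x => -W x := by
    funext x
    show -(deriv (bCoeff V 0) x) - (∫ y in Ioi x, V y * bCoeff V 0 y) = -W x
    have h0 : bCoeff V 0 = fun _ => (1:ℝ) := rfl
    rw [h0]
    simp [hWdef]
  have hdb1 : deriv (bCoeff V 1) 0 = V 0 := by
    rw [hb1]
    have := ((hWd 0).neg).deriv
    rw [show (fun x => -W x) = -W from rfl, this]; ring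
  have hb2 : bCoeff V 2 = fun x => -V x + (W x) ^ 2 / 2 := by
    funext x
    show -(deriv (bCoeff V 1) x) - (∫ y in Ioi x, V y * bCoeff V 1 y) = _
    rw [hb1]
    have hd := ((hWd x).neg).deriv
    erw [hd]
    have hptw : ∀ y : ℝ, V y * -W y = -(V y * W y) := fun y => by ring
    simp only [hptw]
    rw [integral_neg, intA x]
    ring
  have hdb2 : deriv (bCoeff V 2) 0 = -deriv V 0 - V 0 * W 0 := by
    rw [hb2]
    have h := (hVdiff 0).neg.add (((hWd 0).pow 2).div_const 2)
    erw [h.deriv]; ring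
  have hb3 : bCoeff V 3 = fun x => deriv V x + V x * W x + I x - (W x) ^ 3 / 6 := by
    funext x
    show -(deriv (bCoeff V 2) x) - (∫ y in Ioi x, V y * bCoeff V 2 y) = _
    rw [hb2]
    have h := (hVdiff x).neg.add (((hWd x).pow 2).div_const 2)
    erw [h.deriv]
    have hptw : ∀ y : ℝ, V y * (-V y + (W y) ^ 2 / 2)
        = -(V y ^ 2) + V y * (W y) ^ 2 / 2 := fun y => by ring
    simp only [hptw]
    have hi1 : IntegrableOn (fun y => -(V y ^ 2)) (Ioi x) := (hV2intAll x).neg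
    rw [integral_add hi1 ((hintB x).div_const 2), integral_neg,
      integral_div, intB x]
    ring
  have hdb3 : deriv (bCoeff V 3) 0 = deriv (deriv V) 0 + deriv V 0 * W 0
      - 2 * (V 0) ^ 2 + V 0 * (W 0) ^ 2 / 2 := by
    rw [hb3]
    have h := (((hV'diff 0).add ((hVdiff 0).mul (hWd 0))).add (hId 0)).sub
      (((hWd 0).pow 3).div_const 6)
    erw [h.deriv]; ring
  -- the last integral, over V·b₃
  have hintC : IntegrableOn
      (fun y => V y * (deriv V y + V y * W y + I y - (W y) ^ 3 / 6)) (Ioi 0) := by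
    refine key_int _ (C1 + C0 * MW + MI + MW ^ 3 / 6)
      (hVc.mul (((hV'c.add (hVc.mul hWc)).add hIc).sub ((hWc.pow 3).div_const 6))) ?_ 0
    intro y hy
    show ‖V y * (deriv V y + V y * W y + I y - (W y) ^ 3 / 6)‖ ≤ _ * ‖V y‖
    rw [Real.norm_eq_abs, Real.norm_eq_abs, abs_mul,
      mul_comm (C1 + C0 * MW + MI + MW ^ 3 / 6)]
    refine mul_le_mul_of_nonneg_left ?_ (abs_nonneg _)
    have t1 : |deriv V y + V y * W y + I y| ≤ |deriv V y| + |V y * W y| + |I y| :=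
      abs_add_three _ _ _
    have t2 : |deriv V y + V y * W y + I y - (W y) ^ 3 / 6|
        ≤ |deriv V y + V y * W y + I y| + |(W y) ^ 3 / 6| := abs_sub _ _
    have t3 : |V y * W y| ≤ C0 * MW := by
      rw [abs_mul]
      exact mul_le_mul (hVbd y hy) (hWbd y hy) (abs_nonneg _) hC0pos.le
    have t4 : |(W y) ^ 3 / 6| ≤ MW ^ 3 / 6 := by
      rw [abs_div, abs_pow]
      have : |W y| ^ 3 ≤ MW ^ 3 := pow_le_pow_left₀ (abs_nonneg _) (hWbd y hy) 3
      have h6 : |(6:ℝ)| = 6 := by norm_num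
      rw [h6]
      linarith
    have t5 := hV'bd y hy
    have t6 := hIbd y hy
    linarith
  have intC : (∫ y in Ioi (0:ℝ), V y * (deriv V y + V y * W y + I y - (W y) ^ 3 / 6))
      = -((V 0) ^ 2 / 2 - W 0 * I 0 + (W 0) ^ 4 / 24) := by
    have hder : ∀ y ∈ Ici (0:ℝ), HasDerivAt
        (fun u => (V u) ^ 2 / 2 - W u * I u + (W u) ^ 4 / 24)
        (V y * (deriv V y + V y * W y + I y - (W y) ^ 3 / 6)) y := by
      intro y _
      have h := ((((hVdiff y).pow 2).div_const 2).sub ((hWd y).mul (hId y))).add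
        (((hWd y).pow 4).div_const 24)
      convert h using 1
      all_goals first | rfl | ring
    have htend : Tendsto (fun u => (V u) ^ 2 / 2 - W u * I u + (W u) ^ 4 / 24)
        atTop (nhds 0) := by
      have := (((hVtend.pow 2).div_const 2).sub (hWtend.mul hItend)).add
        ((hWtend.pow 4).div_const 24)
      simpa using this
    have h := integral_Ioi_of_hasDerivAt_of_tendsto' hder hintC htend
    rw [h]; ring
  -- values at 0
  have hb1_0 : bCoeff V 1 0 = -W 0 := by rw [hb1]
  have hb2_0 : bCoeff V 2 0 = -V 0 + (W 0) ^ 2 / 2 := by rw [hb2]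
  have hb3_0 : bCoeff V 3 0 = deriv V 0 + V 0 * W 0 + I 0 - (W 0) ^ 3 / 6 := by rw [hb3]
  have hb4_0 : bCoeff V 4 0 = -(deriv (deriv V) 0 + deriv V 0 * W 0
      - 2 * (V 0) ^ 2 + V 0 * (W 0) ^ 2 / 2)
      + ((V 0) ^ 2 / 2 - W 0 * I 0 + (W 0) ^ 4 / 24) := by
    show -(deriv (bCoeff V 3) 0) - (∫ y in Ioi 0, V y * bCoeff V 3 y) = _
    rw [hdb3]
    simp only [hb3]
    rw [intC]
    ring
  -- the d coefficients
  have hd1 : dCoeff V γ 1 = bCoeff V 1 0 := by simp [dCoeff]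
  have hd2 : dCoeff V γ 2 = bCoeff V 2 0 + 2 * deriv (bCoeff V 1) 0 := by
    norm_num [dCoeff, Finset.sum_Ico_eq_sum_range, Finset.sum_range_succ]
  have hd3 : dCoeff V γ 3 = bCoeff V 3 0
      + 2 * (deriv (bCoeff V 1) 0 * (2 * γ) + deriv (bCoeff V 2) 0) := by
    norm_num [dCoeff, Finset.sum_Ico_eq_sum_range, Finset.sum_range_succ]
  have hd4 : dCoeff V γ 4 = bCoeff V 4 0
      + 2 * (deriv (bCoeff V 1) 0 * (2 * γ) ^ 2 + deriv (bCoeff V 2) 0 * (2 * γ)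
        + deriv (bCoeff V 3) 0) := by
    norm_num [dCoeff, Finset.sum_Ico_eq_sum_range, Finset.sum_range_succ]
  rw [hb1_0] at hd1
  rw [hb2_0, hdb1] at hd2
  rw [hb3_0, hdb1, hdb2] at hd3
  rw [hb4_0, hdb1, hdb2, hdb3] at hd4
  -- the ℓ coefficients
  have he1 : ellCoeff V γ 1 = dCoeff V γ 1 := by
    simp [ellCoeff, ellAux]
  have he2 : ellCoeff V γ 2 = dCoeff V γ 2 - 2⁻¹ * (dCoeff V γ 1 * dCoeff V γ 1) := by
    norm_num [ellCoeff, ellAux, Finset.sum_Ico_eq_sum_range, Finset.sum_range_succ]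
  have he3 : ellCoeff V γ 3 = dCoeff V γ 3 - 3⁻¹ * (dCoeff V γ 2 * dCoeff V γ 1
      + 2 * dCoeff V γ 1 * (dCoeff V γ 2 - 2⁻¹ * (dCoeff V γ 1 * dCoeff V γ 1))) := by
    norm_num [ellCoeff, ellAux, Finset.sum_Ico_eq_sum_range, Finset.sum_range_succ]
  have he4 : ellCoeff V γ 4 = dCoeff V γ 4 - 4⁻¹ * (dCoeff V γ 3 * dCoeff V γ 1
      + 2 * dCoeff V γ 2 * (dCoeff V γ 2 - 2⁻¹ * (dCoeff V γ 1 * dCoeff V γ 1))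
      + 3 * dCoeff V γ 1 * (dCoeff V γ 3 - 3⁻¹ * (dCoeff V γ 2 * dCoeff V γ 1
        + 2 * dCoeff V γ 1 * (dCoeff V γ 2
          - 2⁻¹ * (dCoeff V γ 1 * dCoeff V γ 1))))) := by
    norm_num [ellCoeff, ellAux, Finset.sum_Ico_eq_sum_range, Finset.sum_range_succ]
  have hW0 : W 0 = ∫ x in Ioi (0:ℝ), V x := rfl
  have hI0 : I 0 = ∫ x in Ioi (0:ℝ), (V x) ^ 2 := rfl
  refine ⟨?_, ?_, ?_, ?_⟩
  · rw [he1, hd1, hW0]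
  · rw [he2, hd2, hd1]; ring
  · rw [he3, hd3, hd2, hd1, ← hI0]; ring
  · rw [he4, hd4, hd3, hd2, hd1]; ring
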